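/- arXiv:1209.0942 — 4 statements merged into one kernel-verified Lean document; each statement's English description precedes it below -/
import Mathlib

section
/- Let d ≥ 1 and n ≥ 2 be integers and let A be an invertible d × d matrix with rational entries whose order in GL_d(ℚ) is exactly n. Then the number of distinct complex eigenvalues of A (i.e. distinct roots in ℂ of the characteristic polynomial of A) that are different from 1 is at least f(n) := (Σ_{p prime, p ∣ n} φ(p^{v_p(n)})) − ε(n). -/
/-!
If `A` has order `n`, then for every prime `p ∣ n` we have `A ^ (n / p) ≠ 1`. Since `A` is
diagonalizable over `ℂ` (its minimal polynomial divides the separable `X ^ n - 1`), some eigenvalue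
`μ_p` satisfies `μ_p ^ (n / p) ≠ 1`, so its order `m_p` is a divisor of `n` divisible by
`p ^ v_p(n)`. As `A` is rational, with `μ_p` every primitive `m_p`-th root of unity is an eigenvalue
(they are the roots of the irreducible `Φ_{m_p}`), and these sets are disjoint for distinct `m_p`.
Hence there are at least `∑ φ(m)` eigenvalues `≠ 1`, the sum running over the distinct `m_p`.
Grouping the primes `p` by `m_p`, each group contributes
`∑ φ(p ^ v_p(n)) ≤ ∏ φ(p ^ v_p(n)) ≤ φ(m_p)`, where the first step needs every factor to be at
least `2`; this fails only for `φ(2) = 1`, which is what `ε(n)` accounts for.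
-/

/-- `ε(n) = 1` if `v₂(n) = 1` and `n ≠ 2`, and `ε(n) = 0` otherwise. -/
def epsAux (n : ℕ) : ℕ := if n.factorization 2 = 1 ∧ n ≠ 2 then 1 else 0

/-- `f(n) = (Σ_{p prime, p ∣ n} φ(p^{v_p(n)})) − ε(n)`. -/
def fAux (n : ℕ) : ℕ := (∑ p ∈ n.primeFactors, (p ^ n.factorization p).totient) - epsAux n

open Finset Polynomial
open scoped Nat

theorem Finset.sum_le_prod_of_two_le {ι : Type*} {s : Finset ι} {x : ι → ℕ}
    (hx : ∀ i ∈ s, 2 ≤ x i) : ∑ i ∈ s, x i ≤ ∏ i ∈ s, x i := by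
  classical
  induction s using Finset.induction_on with
  | empty => simp
  | insert a s ha ih =>
    rw [sum_insert ha, prod_insert ha]
    have ih := ih fun i hi => hx i (mem_insert_of_mem hi)
    rcases s.eq_empty_or_nonempty with rfl | hs
    · simp
    · have hprod : 2 ≤ ∏ i ∈ s, x i :=
        calc 2 ≤ 2 ^ #s := Nat.le_self_pow hs.card_pos.ne' 2
          _ ≤ ∏ i ∈ s, x i := pow_card_le_prod s x 2 fun i hi => hx i (mem_insert_of_mem hi)
      calc x a + ∑ i ∈ s, x i ≤ x a + ∏ i ∈ s, x i := by omega
        _ ≤ x a * ∏ i ∈ s, x i := add_le_mul (hx a (mem_insert_self a s)) hprod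

namespace Nat

open Function

theorem totient_prod_of_pairwise_coprime {ι : Type*} {s : Finset ι} {f : ι → ℕ}
    (hs : (s : Set ι).Pairwise (Coprime on f)) : φ (∏ i ∈ s, f i) = ∏ i ∈ s, φ (f i) :=
  ArithmeticFunction.IsMultiplicative.map_prod (f := ⟨φ, totient_zero⟩) f
    ⟨totient_one, fun h => totient_mul h⟩ s hs

theorem two_le_totient_prime_pow {p k : ℕ} (hp : p.Prime) (hk : k ≠ 0) (h2 : p ^ k ≠ 2) :
    2 ≤ φ (p ^ k) := by
  by_contra! h
  rcases (dvd_prime prime_two).1 (dvd_two_of_totient_le_one (pow_pos hp.pos k) (by omega))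
    with h1 | h1
  · exact (one_lt_pow hk hp.one_lt).ne' h1
  · exact h2 h1

theorem sum_totient_prime_pow_le_totient {F : Finset ℕ} (hF : ∀ p ∈ F, p.Prime) {e : ℕ → ℕ}
    (h2 : ∀ p ∈ F, 2 ≤ φ (p ^ e p)) {m : ℕ} (hm : m ≠ 0) (hdvd : ∀ p ∈ F, p ^ e p ∣ m) :
    ∑ p ∈ F, φ (p ^ e p) ≤ φ m := by
  have hcop : (F : Set ℕ).Pairwise (Coprime on fun p => p ^ e p) := fun p hp q hq hpq =>
    ((coprime_primes (hF p hp) (hF q hq)).2 hpq).pow _ _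
  -- Over `ℕ`, `IsCoprime` (as used by `Finset.prod_dvd_of_coprime`) is too strong; pass to `ℤ`.
  have hprod : ((∏ p ∈ F, p ^ e p : ℕ) : ℤ) ∣ m := by
    push_cast
    exact Finset.prod_dvd_of_coprime
      (fun p hp q hq hpq => isCoprime_iff_coprime.2 (hcop hp hq hpq))
      fun p hp => Int.natCast_dvd_natCast.2 (hdvd p hp)
  calc ∑ p ∈ F, φ (p ^ e p) ≤ ∏ p ∈ F, φ (p ^ e p) := sum_le_prod_of_two_le h2
    _ = φ (∏ p ∈ F, p ^ e p) := (totient_prod_of_pairwise_coprime hcop).symm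
    _ ≤ φ m := le_of_dvd (totient_pos.2 (pos_of_ne_zero hm))
        (totient_dvd_of_dvd (Int.natCast_dvd_natCast.1 hprod))

theorem sum_totient_prime_pow_le_sum_totient_image {T : Finset ℕ} (hT : ∀ p ∈ T, p.Prime)
    {e : ℕ → ℕ} (h2 : ∀ p ∈ T, 2 ≤ φ (p ^ e p)) {g : ℕ → ℕ} (hg0 : ∀ p ∈ T, g p ≠ 0)
    (hg : ∀ p ∈ T, p ^ e p ∣ g p) :
    ∑ p ∈ T, φ (p ^ e p) ≤ ∑ m ∈ T.image g, φ m := by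
  classical
  rw [← sum_fiberwise_of_maps_to fun p hp => mem_image_of_mem g hp]
  refine sum_le_sum fun m hm => ?_
  obtain ⟨p, hp, rfl⟩ := mem_image.1 hm
  refine sum_totient_prime_pow_le_totient (fun q hq => hT q (mem_filter.1 hq).1)
    (fun q hq => h2 q (mem_filter.1 hq).1) (hg0 p hp) fun q hq => ?_
  obtain ⟨hqT, hq⟩ := mem_filter.1 hq
  exact hq ▸ hg q hqT

end Nat

theorem fAux_le_sum_totient_image {n : ℕ} {g : ℕ → ℕ} (hg0 : ∀ p ∈ n.primeFactors, g p ≠ 0)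
    (hg : ∀ p ∈ n.primeFactors, p ^ n.factorization p ∣ g p) :
    fAux n ≤ ∑ m ∈ n.primeFactors.image g, φ m := by
  have hprime : ∀ p ∈ n.primeFactors, p.Prime := fun p => Nat.prime_of_mem_primeFactors
  have h2 : ∀ p ∈ n.primeFactors, p ^ n.factorization p ≠ 2 → 2 ≤ φ (p ^ n.factorization p) :=
    fun p hp => Nat.two_le_totient_prime_pow (hprime p hp)
      (Finsupp.mem_support_iff.1 (n.support_factorization ▸ hp))
  by_cases hv : n.factorization 2 = 1
  · have h2T : 2 ∈ n.primeFactors := n.support_factorization ▸ Finsupp.mem_support_iff.2 (by omega)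
    have hsplit : ∑ p ∈ n.primeFactors, φ (p ^ n.factorization p)
        = 1 + ∑ p ∈ n.primeFactors.erase 2, φ (p ^ n.factorization p) := by
      rw [← add_sum_erase _ _ h2T, hv, pow_one, Nat.totient_two]
    by_cases hn2 : n = 2
    · calc fAux n ≤ ∑ p ∈ n.primeFactors, φ (p ^ n.factorization p) := Nat.sub_le _ _
        _ = 1 := by
          rw [hsplit, hn2, Nat.prime_two.primeFactors, erase_singleton, sum_empty, add_zero]
        _ ≤ φ (g 2) := Nat.totient_pos.2 (Nat.pos_of_ne_zero (hg0 2 h2T))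
        _ ≤ _ := single_le_sum (fun _ _ => Nat.zero_le _) (mem_image_of_mem g h2T)
    · rw [fAux, epsAux, if_pos ⟨hv, hn2⟩, hsplit, add_tsub_cancel_left]
      calc _ ≤ ∑ m ∈ (n.primeFactors.erase 2).image g, φ m :=
            Nat.sum_totient_prime_pow_le_sum_totient_image
              (fun p hp => hprime p (mem_of_mem_erase hp))
              (fun p hp => h2 p (mem_of_mem_erase hp) fun h => ne_of_mem_erase hp
                (Nat.prime_two.pow_eq_iff.1 h).1)
              (fun p hp => hg0 p (mem_of_mem_erase hp)) fun p hp => hg p (mem_of_mem_erase hp)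
        _ ≤ _ := sum_le_sum_of_subset (image_subset_image (erase_subset _ _))
  · calc fAux n ≤ ∑ p ∈ n.primeFactors, φ (p ^ n.factorization p) := Nat.sub_le _ _
      _ ≤ _ := Nat.sum_totient_prime_pow_le_sum_totient_image hprime
          (fun p hp => h2 p hp fun h => by
            obtain ⟨rfl, h1⟩ := Nat.prime_two.pow_eq_iff.1 h
            exact hv h1) hg0 hg

theorem pow_orderOf_div_ne_one {G : Type*} [Monoid G] {x : G} {p : ℕ}
    (hp : p ∈ (orderOf x).primeFactors) : x ^ (orderOf x / p) ≠ 1 := by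
  obtain ⟨hp, hpn, hn⟩ := Nat.mem_primeFactors.1 hp
  exact pow_ne_one_of_lt_orderOf
    (Nat.div_pos (Nat.le_of_dvd (Nat.pos_of_ne_zero hn) hpn) hp.pos).ne'
    (Nat.div_lt_self (Nat.pos_of_ne_zero hn) hp.one_lt)

theorem pow_factorization_dvd_orderOf {G : Type*} [Monoid G] {x : G} {n p : ℕ} (hp : p.Prime)
    (hx : x ^ n = 1) (hxp : x ^ (n / p) ≠ 1) : p ^ n.factorization p ∣ orderOf x := by
  obtain ⟨c, hc⟩ := orderOf_dvd_of_pow_eq_one hx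
  have hpc : ¬ p ∣ c := by
    rintro ⟨c', rfl⟩
    apply hxp
    rw [hc, mul_left_comm, Nat.mul_div_cancel_left _ hp.pos, pow_mul, pow_orderOf_eq_one, one_pow]
  refine ((hp.coprime_iff_not_dvd.2 hpc).pow_left _).dvd_of_dvd_mul_right ?_
  rw [← hc]
  exact Nat.ordProj_dvd n p

theorem spectrum.pow_eq_one_of_pow_eq_one {K A : Type*} [Field K] [Ring A] [Algebra K A] {a : A}
    {N : ℕ} (ha : a ^ N = 1) {μ : K} (hμ : μ ∈ spectrum K a) : μ ^ N = 1 := by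
  have hσ := spectrum.pow_mem_pow a N hμ
  rw [ha, spectrum.mem_iff, ← map_one (algebraMap K A), ← map_sub] at hσ
  by_contra h
  exact hσ ((isUnit_iff_ne_zero.2 (sub_ne_zero.2 h)).map _)

theorem Polynomial.Separable.dvd_of_forall_isRoot {K : Type*} [Field K] {f g : K[X]}
    (hf : f.Separable) (hs : f.Splits) (hg : g ≠ 0) (h : ∀ x, f.IsRoot x → g.IsRoot x) :
    f ∣ g :=
  hs.dvd_of_roots_le_roots hf.ne_zero <| (Multiset.le_iff_subset (nodup_roots hf)).2 fun x hx =>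
    (mem_roots hg).2 (h x (isRoot_of_mem_roots hx))

theorem Matrix.map_pow_eq_one_iff {R S ι : Type*} [Semiring R] [Semiring S] [Fintype ι]
    [DecidableEq ι] {f : R →+* S} (hf : Function.Injective f) {M : Matrix ι ι R} {k : ℕ} :
    M.map f ^ k = 1 ↔ M ^ k = 1 := by
  rw [← RingHom.mapMatrix_apply, ← map_pow, ← map_one f.mapMatrix]
  exact (Matrix.map_injective hf).eq_iff

theorem Matrix.exists_isRoot_charpoly_pow_ne_one {K ι : Type*} [Field K] [IsAlgClosed K]
    [Fintype ι] [DecidableEq ι] {B : Matrix ι ι K} {N m : ℕ} (hN : (N : K) ≠ 0)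
    (hB : B ^ N = 1) (hm : B ^ m ≠ 1) : ∃ μ, B.charpoly.IsRoot μ ∧ μ ^ m ≠ 1 := by
  by_contra! h
  rcases m.eq_zero_or_pos with rfl | hm0
  · exact hm (pow_zero B)
  have hsep : (minpoly K B).Separable :=
    (separable_X_pow_sub_C 1 hN one_ne_zero).of_dvd (minpoly.dvd K B (by simp [hB]))
  have hdvd : minpoly K B ∣ X ^ m - C 1 :=
    hsep.dvd_of_forall_isRoot (IsAlgClosed.splits _) (X_pow_sub_C_ne_zero hm0 1) fun μ hμ => by
      simpa [sub_eq_zero] using h μ (hμ.dvd B.minpoly_dvd_charpoly)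
  exact hm (by simpa [sub_eq_zero] using minpoly.dvd_iff.1 hdvd)

theorem IsPrimitiveRoot.aeval_eq_zero_of_aeval_eq_zero {K : Type*} [Field K] [CharZero K]
    {m : ℕ} (hm : 0 < m) {μ ζ : K} (hμ : IsPrimitiveRoot μ m) (hζ : IsPrimitiveRoot ζ m)
    {p : ℚ[X]} (h : aeval μ p = 0) : aeval ζ p = 0 := by
  have hdvd : cyclotomic m ℚ ∣ p := cyclotomic_eq_minpoly_rat hμ hm ▸ minpoly.dvd ℚ μ h
  rw [← eval_map_algebraMap]
  exact (hζ.isRoot_cyclotomic hm).dvd (by simpa using Polynomial.map_dvd (algebraMap ℚ K) hdvd)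

theorem Matrix.primitiveRoots_orderOf_subset_roots_charpoly_erase_one {K ι : Type*} [Field K]
    [DecidableEq K] [CharZero K] [Fintype ι] [DecidableEq ι] (M : Matrix ι ι ℚ) {μ : K}
    (hμ : (M.map ((↑) : ℚ → K)).charpoly.IsRoot μ) (h1 : μ ≠ 1) :
    primitiveRoots (orderOf μ) K ⊆ ((M.map ((↑) : ℚ → K)).charpoly.roots.toFinset).erase 1 := by
  have hroot : ∀ x : K, (M.map ((↑) : ℚ → K)).charpoly.IsRoot x ↔ aeval x M.charpoly = 0 :=
    fun x => by rw [← eval_map_algebraMap, ← Matrix.charpoly_map]; rfl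
  rcases (orderOf μ).eq_zero_or_pos with h0 | h0
  · simp [h0]
  intro ζ hζ
  have hζ' := (mem_primitiveRoots h0).1 hζ
  rw [mem_erase, Multiset.mem_toFinset, mem_roots (Matrix.charpoly_monic _).ne_zero]
  exact ⟨hζ'.ne_one (lt_of_le_of_ne h0 (Ne.symm (mt orderOf_eq_one_iff.1 h1))), (hroot ζ).2
    ((IsPrimitiveRoot.orderOf μ).aeval_eq_zero_of_aeval_eq_zero h0 hζ' ((hroot μ).1 hμ))⟩

theorem Complex.sum_totient_le_card_of_primitiveRoots_subset {S : Finset ℕ} {E : Finset ℂ}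
    (h : ∀ m ∈ S, primitiveRoots m ℂ ⊆ E) : ∑ m ∈ S, φ m ≤ #E := by
  calc ∑ m ∈ S, φ m = #(S.biUnion (primitiveRoots · ℂ)) := by
        rw [card_biUnion fun m _ l _ hml => IsPrimitiveRoot.disjoint hml]
        simp only [Complex.card_primitiveRoots]
    _ ≤ #E := card_le_card (biUnion_subset.2 h)

theorem card_eigenvalues_ne_one_ge_general (d n : ℕ) (A : GL (Fin d) ℚ) (hA : orderOf A = n) :
    fAux n ≤
      ((((A : Matrix (Fin d) (Fin d) ℚ).map ((↑) : ℚ → ℂ)).charpoly.roots.toFinset).erase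
        1).card := by
  subst hA
  set B := (A : Matrix (Fin d) (Fin d) ℚ).map ((↑) : ℚ → ℂ)
  have hBpow (k : ℕ) : B ^ k = 1 ↔ A ^ k = 1 := by
    rw [← Units.val_eq_one, Units.val_pow_eq_pow_val]
    exact Matrix.map_pow_eq_one_iff (f := Rat.castHom ℂ) Rat.cast_injective
  have hB : B ^ orderOf A = 1 := (hBpow _).2 (pow_orderOf_eq_one A)
  have hexists : ∀ p ∈ (orderOf A).primeFactors,
      ∃ μ, B.charpoly.IsRoot μ ∧ μ ^ (orderOf A / p) ≠ 1 := fun p hp =>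
    Matrix.exists_isRoot_charpoly_pow_ne_one (Nat.cast_ne_zero.2 (Nat.mem_primeFactors.1 hp).2.2)
      hB (mt (hBpow _).1 (pow_orderOf_div_ne_one hp))
  choose! μ hμ hμp using hexists
  have hμpow : ∀ p ∈ (orderOf A).primeFactors, μ p ^ orderOf A = 1 := fun p hp =>
    spectrum.pow_eq_one_of_pow_eq_one hB (Matrix.mem_spectrum_iff_isRoot_charpoly.2 (hμ p hp))
  refine (fAux_le_sum_totient_image (g := fun p => orderOf (μ p))
    (fun p hp => ne_zero_of_dvd_ne_zero (Nat.mem_primeFactors.1 hp).2.2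
      (orderOf_dvd_of_pow_eq_one (hμpow p hp)))
    (fun p hp => pow_factorization_dvd_orderOf (Nat.prime_of_mem_primeFactors hp) (hμpow p hp)
      (hμp p hp))).trans (Complex.sum_totient_le_card_of_primitiveRoots_subset ?_)
  simp only [mem_image, forall_exists_index, and_imp, forall_apply_eq_imp_iff₂]
  exact fun p hp => Matrix.primitiveRoots_orderOf_subset_roots_charpoly_erase_one _ (hμ p hp)
    fun h => hμp p hp (by rw [h, one_pow])

/-- If `A ∈ GL_d(ℚ)` has order exactly `n ≥ 2`, then the number of distinct complex
eigenvalues of `A` (distinct roots in `ℂ` of its characteristic polynomial) different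
from `1` is at least `f(n)`. -/
theorem card_eigenvalues_ne_one_ge (d n : ℕ) (hd : 1 ≤ d) (hn : 2 ≤ n)
    (A : GL (Fin d) ℚ) (hA : orderOf A = n) :
    fAux n ≤
      ((((A : Matrix (Fin d) (Fin d) ℚ).map ((↑) : ℚ → ℂ)).charpoly.roots.toFinset).erase
        1).card :=
  card_eigenvalues_ne_one_ge_general d n A hA
end

section
/- Let g ≥ 1 be an integer, let J := {1, …, g} ⊔ {−1, …, −g} (a set of size 2g, realizable as Fin g ⊕ Fin g), and let ρ ∈ Perm(J) be the involution exchanging k and −k for every k. For σ ∈ Perm(J) let permutations act on the free ℤ-module ℤ^J = (J → ℤ) by permuting coordinates, and let μ ∈ ℤ^J be the indicator function of {1, …, g}. Let G be a subgroup of Perm(J) all of whose elements commute with ρ, and suppose G contains, for every k ∈ {1, …, g}, the transposition τ_k exchanging k and −k. Then the ℤ-submodule of ℤ^J generated by the orbit {σ·μ : σ ∈ G} equals the submodule {x ∈ ℤ^J : x(i) + x(−i) = x(j) + x(−j) for all i, j ∈ {1, …, g}}. -/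
/-!
Write `μ` for the indicator of the first summand and `τ_k` for the transposition `(inl k, inr k)`.
Commuting with the involution `ρ`, every `σ ∈ G` maps each pair `{b, ρ b}` to a pair, which
contains exactly one point of the first summand; hence the pair sums of `μ ∘ σ` are all `1`.
Conversely `μ - μ ∘ τ_k = e_{inl k} - e_{inr k}`, and a vector whose pair sums all equal `c` is
`c • μ + ∑ k, (x (inl k) - c) • (e_{inl k} - e_{inr k})`.
-/

open Equiv Function Submodule Sum

variable {R ι : Type*}

section Semiring

variable [Semiring R]

variable (R ι) in
def inlIndicator : ι ⊕ ι → R :=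
  Sum.elim (fun _ => 1) fun _ => 0

@[simp]
theorem inlIndicator_inl (i : ι) : inlIndicator R ι (inl i) = 1 :=
  rfl

@[simp]
theorem inlIndicator_inr (i : ι) : inlIndicator R ι (inr i) = 0 :=
  rfl

theorem inlIndicator_add_inlIndicator_swap (b : ι ⊕ ι) :
    inlIndicator R ι b + inlIndicator R ι b.swap = 1 := by
  cases b <;> simp

variable (R ι) in
def equalPairSums : Submodule R (ι ⊕ ι → R) where
  carrier := {x | ∀ i j, x (inl i) + x (inr i) = x (inl j) + x (inr j)}
  add_mem' {a b} ha hb i j := by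
    simp only [Pi.add_apply]
    rw [add_add_add_comm, ha i j, hb i j, add_add_add_comm]
  zero_mem' _ _ := rfl
  smul_mem' c a ha i j := by
    simp only [Pi.smul_apply, smul_eq_mul]
    rw [← mul_add, ← mul_add, ha i j]

theorem exists_pairSum_eq_of_mem_equalPairSums {x : ι ⊕ ι → R} (hx : x ∈ equalPairSums R ι) :
    ∃ c, ∀ i, x (inl i) + x (inr i) = c := by
  obtain hι | ⟨⟨i₀⟩⟩ := isEmpty_or_nonempty ι
  · exact ⟨0, isEmptyElim⟩
  · exact ⟨_, fun i => hx i i₀⟩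

theorem inlIndicator_comp_mem_equalPairSums {σ : Perm (ι ⊕ ι)} (hσ : Commute σ (sumComm ι ι)) :
    inlIndicator R ι ∘ σ ∈ equalPairSums R ι := by
  have pairSum_eq_one (i : ι) :
      inlIndicator R ι (σ (inl i)) + inlIndicator R ι (σ (inr i)) = 1 := by
    have hσi : σ (inr i) = (σ (inl i)).swap := DFunLike.congr_fun hσ.eq (inl i)
    rw [hσi, inlIndicator_add_inlIndicator_swap]
  intro i j
  simp only [comp_apply, pairSum_eq_one]

end Semiring

section Ring

variable [Ring R] [DecidableEq ι]

theorem inlIndicator_sub_comp_swap (k : ι) :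
    inlIndicator R ι - inlIndicator R ι ∘ Equiv.swap (inl k) (inr k) =
      Pi.single (inl k) 1 - Pi.single (inr k) 1 := by
  funext b
  rcases b with j | j <;> by_cases hjk : j = k
  all_goals simp [hjk, swap_apply_of_ne_of_ne]

theorem eq_smul_inlIndicator_add_sum_of_pairSum_eq [Fintype ι] {x : ι ⊕ ι → R} {c : R}
    (hx : ∀ i, x (inl i) + x (inr i) = c) :
    x = c • inlIndicator R ι +
      ∑ k, (x (inl k) - c) • (Pi.single (inl k) 1 - Pi.single (inr k) 1) := by
  funext b
  rcases b with j | j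
  · simp [Pi.single_apply]
  · simp [Pi.single_apply, ← hx j]

theorem equalPairSums_le_span [Fintype ι] {S : Set (ι ⊕ ι → R)} (hμ : inlIndicator R ι ∈ S)
    (hτ : ∀ k, inlIndicator R ι ∘ Equiv.swap (inl k) (inr k) ∈ S) :
    equalPairSums R ι ≤ span R S := by
  intro x hx
  obtain ⟨c, hc⟩ := exists_pairSum_eq_of_mem_equalPairSums hx
  rw [eq_smul_inlIndicator_add_sum_of_pairSum_eq hc]
  refine add_mem (smul_mem _ _ (subset_span hμ)) (sum_mem fun k _ => smul_mem _ _ ?_)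
  rw [← inlIndicator_sub_comp_swap]
  exact sub_mem (subset_span hμ) (subset_span (hτ k))

theorem span_orbit_inlIndicator_eq_equalPairSums [Fintype ι] (G : Subgroup (Perm (ι ⊕ ι)))
    (hcomm : ∀ σ ∈ G, Commute σ (sumComm ι ι)) (hτ : ∀ k, Equiv.swap (inl k) (inr k) ∈ G) :
    span R {x | ∃ σ ∈ G, x = inlIndicator R ι ∘ σ} = equalPairSums R ι :=
  le_antisymm
    (span_le.2 fun _ ⟨σ, hσ, hx⟩ => hx ▸ inlIndicator_comp_mem_equalPairSums (hcomm σ hσ))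
    (equalPairSums_le_span ⟨1, one_mem G, rfl⟩ fun k => ⟨_, hτ k, rfl⟩)

end Ring

theorem span_orbit_eq_of_all_transpositions_general (g : ℕ)
    (G : Subgroup (Equiv.Perm (Fin g ⊕ Fin g)))
    (hcomm : ∀ σ ∈ G, Commute σ (Equiv.sumComm (Fin g) (Fin g) : Equiv.Perm (Fin g ⊕ Fin g)))
    (hτ : ∀ k : Fin g, (Equiv.swap (Sum.inl k) (Sum.inr k) : Equiv.Perm (Fin g ⊕ Fin g)) ∈ G) :
    (Submodule.span ℤ
        {x : Fin g ⊕ Fin g → ℤ | ∃ σ ∈ G,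
          x = (Sum.elim (fun _ => (1 : ℤ)) fun _ => (0 : ℤ)) ∘ ⇑σ} : Set (Fin g ⊕ Fin g → ℤ)) =
      {x : Fin g ⊕ Fin g → ℤ | ∀ i j : Fin g,
        x (Sum.inl i) + x (Sum.inr i) = x (Sum.inl j) + x (Sum.inr j)} :=
  congrArg SetLike.coe (span_orbit_inlIndicator_eq_equalPairSums G hcomm hτ)

/-- Let `J = {1,…,g} ⊔ {−1,…,−g}` (realized as `Fin g ⊕ Fin g`), `ρ` the involution
exchanging `k` and `−k`, and `μ ∈ ℤ^J` the indicator function of `{1,…,g}`. If `G` is a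
subgroup of `Perm J` all of whose elements commute with `ρ` and containing all the
transpositions `τ_k = (k, −k)`, then the `ℤ`-submodule of `ℤ^J` generated by the orbit
`{σ·μ : σ ∈ G}` equals `{x : x(i) + x(−i) = x(j) + x(−j) for all i, j}`. -/
theorem span_orbit_eq_of_all_transpositions (g : ℕ) (hg : 1 ≤ g)
    (G : Subgroup (Equiv.Perm (Fin g ⊕ Fin g)))
    (hcomm : ∀ σ ∈ G, Commute σ (Equiv.sumComm (Fin g) (Fin g) : Equiv.Perm (Fin g ⊕ Fin g)))
    (hτ : ∀ k : Fin g, (Equiv.swap (Sum.inl k) (Sum.inr k) : Equiv.Perm (Fin g ⊕ Fin g)) ∈ G) :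
    (Submodule.span ℤ
        {x : Fin g ⊕ Fin g → ℤ | ∃ σ ∈ G,
          x = (Sum.elim (fun _ => (1 : ℤ)) fun _ => (0 : ℤ)) ∘ ⇑σ} : Set (Fin g ⊕ Fin g → ℤ)) =
      {x : Fin g ⊕ Fin g → ℤ | ∀ i j : Fin g,
        x (Sum.inl i) + x (Sum.inr i) = x (Sum.inl j) + x (Sum.inr j)} :=
  span_orbit_eq_of_all_transpositions_general g G hcomm hτ
end

section
/- Let p be a prime number and let σ be a permutation of Fin p of order exactly p. Let V be an 𝔽₂-linear subspace of the space of functions Fin p → ℤ/2ℤ that is stable under the coordinate-permutation action of σ and contains the constant function 1 (the all-ones vector). Then p divides 2^v − 2, where v is the 𝔽₂-dimension of V. -/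
/-- Let `p` be a prime and `σ` a permutation of `Fin p` of order exactly `p`. If `V` is an
`𝔽₂`-subspace of `Fin p → ℤ/2ℤ` stable under the coordinate-permutation action of `σ` and
containing the all-ones vector, then `p ∣ 2^v − 2` where `v = dim_{𝔽₂} V`. -/
theorem prime_dvd_two_pow_dim_sub_two (p : ℕ) (hp : p.Prime) (σ : Equiv.Perm (Fin p))
    (hσ : orderOf σ = p) (V : Submodule (ZMod 2) (Fin p → ZMod 2))
    (hstab : ∀ x ∈ V, x ∘ ⇑σ ∈ V) (hone : (fun _ => (1 : ZMod 2)) ∈ V) :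
    p ∣ 2 ^ Module.finrank (ZMod 2) V - 2 := by
  classical
  have hppos : 0 < p := hp.pos
  have hFp : Fact p.Prime := ⟨hp⟩
  have hσp : σ ^ p = 1 := by
    have := pow_orderOf_eq_one σ; rwa [hσ] at this
  -- stability under powers of σ
  have hstabpow : ∀ (n : ℕ) (x : Fin p → ZMod 2), x ∈ V → x ∘ ⇑(σ ^ n) ∈ V := by
    intro n
    induction n with
    | zero => intro x hx; simpa using hx
    | succ n ih =>
      intro x hx
      have h1 : x ∘ ⇑(σ ^ (n + 1)) = (x ∘ ⇑(σ ^ n)) ∘ ⇑σ := by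
        ext i; simp [pow_succ, Function.comp]
      rw [h1]
      exact hstab _ (ih x hx)
  have hstabinv : ∀ x ∈ V, x ∘ ⇑σ⁻¹ ∈ V := by
    intro x hx
    have hpred : p - 1 + 1 = p := Nat.succ_pred_eq_of_pos hppos
    have hmul : σ ^ (p - 1) * σ = 1 := by
      rw [← pow_succ, hpred, hσp]
    have hinv : σ⁻¹ = σ ^ (p - 1) := (eq_inv_of_mul_eq_one_left hmul).symm
    rw [hinv]
    exact hstabpow _ x hx
  -- the permutation of V induced by σ
  let τ : Equiv.Perm V :=
    { toFun := fun x => ⟨(x : Fin p → ZMod 2) ∘ ⇑σ, hstab _ x.2⟩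
      invFun := fun x => ⟨(x : Fin p → ZMod 2) ∘ ⇑σ⁻¹, hstabinv _ x.2⟩
      left_inv := by
        intro x; apply Subtype.ext; ext i; simp [Function.comp]
      right_inv := by
        intro x; apply Subtype.ext; ext i; simp [Function.comp] }
  have hτpow : ∀ (n : ℕ) (x : V), ((τ ^ n) x : Fin p → ZMod 2) = (x : Fin p → ZMod 2) ∘ ⇑(σ ^ n) := by
    intro n
    induction n with
    | zero => intro x; simp
    | succ n ih =>
      intro x
      have h2 : (τ ^ (n + 1)) x = τ ((τ ^ n) x) := by
        rw [pow_succ', Equiv.Perm.mul_apply]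
      rw [h2]
      have h3 : (τ ((τ ^ n) x) : Fin p → ZMod 2) = ((τ ^ n) x : Fin p → ZMod 2) ∘ ⇑σ := rfl
      rw [h3, ih]
      ext i
      simp [pow_succ, Equiv.Perm.mul_apply, Function.comp]
  have hτp : τ ^ p = 1 := by
    ext x
    have h4 : ((τ ^ p) x : Fin p → ZMod 2) = (x : Fin p → ZMod 2) ∘ ⇑(σ ^ p) := hτpow p x
    rw [hσp] at h4
    have : (τ ^ p) x = x := by
      apply Subtype.ext; rw [h4]; ext i; rfl
    simp [this]
  -- fixed points of τ are fixed by all integer powers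
  have hfixallz : ∀ x : V, τ x = x → ∀ k : ℤ, (τ ^ k) x = x := by
    intro x hx k
    have hn : ∀ n : ℕ, (τ ^ n) x = x := by
      intro n
      induction n with
      | zero => simp
      | succ n ih => rw [pow_succ', Equiv.Perm.mul_apply, ih, hx]
    rcases Int.eq_nat_or_neg k with ⟨n, rfl | rfl⟩
    · rw [zpow_natCast]; exact hn n
    · rw [zpow_neg, zpow_natCast]
      have : (τ ^ n) x = x := hn n
      calc ((τ ^ n)⁻¹ : Equiv.Perm V) x = (τ ^ n)⁻¹ ((τ ^ n) x) := by rw [this]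
        _ = x := by simp
  -- the cyclic group generated by τ is a p-group
  have hPG : IsPGroup p (Subgroup.zpowers τ) := by
    intro g
    refine ⟨1, ?_⟩
    obtain ⟨k, hk⟩ := Subgroup.mem_zpowers_iff.mp g.2
    apply Subtype.ext
    push_cast
    rw [← hk, pow_one, ← zpow_natCast, ← zpow_mul, mul_comm, zpow_mul, zpow_natCast, hτp,
      one_zpow]
  have hmod := hPG.card_modEq_card_fixedPoints V
  -- σ is a p-cycle, hence transitive
  have hcyc : σ.IsCycle := by
    apply Equiv.Perm.isCycle_of_prime_order'' (by simpa using hp)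
    simpa using hσ
  have hsupp : σ.support = Finset.univ := by
    apply Finset.eq_univ_of_card
    rw [← hcyc.orderOf, hσ]
    simp
  have hmove : ∀ i : Fin p, σ i ≠ i := by
    intro i
    have : i ∈ σ.support := by rw [hsupp]; exact Finset.mem_univ i
    exact Equiv.Perm.mem_support.mp this
  -- fixed vectors are constant
  have hconst : ∀ x : Fin p → ZMod 2, x ∘ ⇑σ = x → ∀ i j : Fin p, x i = x j := by
    intro x hx i j
    obtain ⟨n, hn⟩ := hcyc.exists_pow_eq (hmove i) (hmove j)
    have key : ∀ m : ℕ, x ((σ ^ m) i) = x i := by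
      intro m
      induction m with
      | zero => simp
      | succ m ih =>
        have h5 : (σ ^ (m + 1)) i = (σ ^ m) (σ i) := by
          rw [pow_succ, Equiv.Perm.mul_apply]
        have h6 : (σ ^ (m + 1)) i = σ ((σ ^ m) i) := by
          rw [pow_succ', Equiv.Perm.mul_apply]
        rw [h6]
        have := congrFun hx ((σ ^ m) i)
        simpa [Function.comp, ih] using this
    rw [← hn, key n]
  -- the fixed points of the action are exactly 0 and the all-ones vector
  have hzmod : ∀ c : ZMod 2, c = 0 ∨ c = 1 := by decide
  have hτzero : τ (0 : V) = 0 := by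
    apply Subtype.ext; ext i; rfl
  have hτone : τ (⟨fun _ => 1, hone⟩ : V) = ⟨fun _ => 1, hone⟩ := by
    apply Subtype.ext; ext i; rfl
  have hfix : MulAction.fixedPoints (Subgroup.zpowers τ) V =
      ({(0 : V), ⟨fun _ => 1, hone⟩} : Set V) := by
    ext x
    constructor
    · intro hx
      have hτx : τ x = x := hx ⟨τ, Subgroup.mem_zpowers τ⟩
      have hxc : (x : Fin p → ZMod 2) ∘ ⇑σ = x := congrArg Subtype.val hτx
      have hc := hconst x hxc
      rcases hzmod (x.1 ⟨0, hppos⟩) with h0 | h1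
      · left
        apply Subtype.ext; ext i
        rw [hc i ⟨0, hppos⟩, h0]; rfl
      · right
        apply Subtype.ext; ext i
        rw [hc i ⟨0, hppos⟩, h1]
    · intro hx g
      obtain ⟨k, hk⟩ := Subgroup.mem_zpowers_iff.mp g.2
      have hsmul : g • x = ((g : Equiv.Perm V)) x := rfl
      rw [hsmul, ← hk]
      rcases hx with h | h
      · subst h; exact hfixallz _ hτzero k
      · subst h; exact hfixallz _ hτone k
  have hne : (0 : V) ≠ (⟨fun _ => 1, hone⟩ : V) := by
    intro h
    have := congrFun (congrArg Subtype.val h) ⟨0, hppos⟩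
    simp at this
  have hcard2 : Nat.card (MulAction.fixedPoints (Subgroup.zpowers τ) V) = 2 := by
    rw [hfix, Nat.card_coe_set_eq, Set.ncard_pair hne]
  -- card V = 2 ^ finrank
  have : Fintype V := Fintype.ofFinite V
  have hcardV : Nat.card V = 2 ^ Module.finrank (ZMod 2) V := by
    rw [Nat.card_eq_fintype_card, Module.card_eq_pow_finrank (K := ZMod 2) (V := V), ZMod.card]
  rw [hcardV, hcard2] at hmod
  have hfr : 0 < Module.finrank (ZMod 2) V := by
    have : Nontrivial V := ⟨0, ⟨fun _ => 1, hone⟩, hne⟩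
    exact Module.finrank_pos
  have h2le : 2 ≤ 2 ^ Module.finrank (ZMod 2) V := by
    calc 2 = 2 ^ 1 := (pow_one 2).symm
    _ ≤ 2 ^ Module.finrank (ZMod 2) V := Nat.pow_le_pow_right (by norm_num) hfr
  exact (Nat.modEq_iff_dvd' h2le).mp hmod.symm
end

section
/- Let p be an odd prime. Let X be the free ℤ-module ℤ^{p+1} with basis μ, e₁, …, e_p, and let L be the ℤ-submodule of X generated by the p + 1 elements μ, e₁ + e₂ + ⋯ + e_p, and e₁ + e_i for i = 2, …, p. Then L has full rank p + 1 in X and the quotient X/L is a cyclic group isomorphic to ℤ/(p−2)ℤ. -/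
/-- Let `p` be an odd prime and let `X = ℤμ ⊕ ℤe₁ ⊕ ⋯ ⊕ ℤe_p` be free of rank `p + 1`,
realized as `ℤ × (Fin p → ℤ)` with `μ = (1,0)` and `e_i = (0, Pi.single (i−1) 1)`. Let `L`
be the submodule generated by `μ`, `e₁ + ⋯ + e_p` and the elements `e₁ + e_i`, `2 ≤ i ≤ p`.
Then `L` has full rank `p + 1` and `X/L ≅ ℤ/(p−2)ℤ`. -/
theorem quotient_by_orbit_lattice (p : ℕ) (hp : p.Prime) (hodd : Odd p)
    (L : Submodule ℤ (ℤ × (Fin p → ℤ)))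
    (hL : L = Submodule.span ℤ
      ({((1 : ℤ), (0 : Fin p → ℤ)), ((0 : ℤ), fun _ => (1 : ℤ))} ∪
        {x : ℤ × (Fin p → ℤ) | ∃ i : Fin p, i ≠ ⟨0, hp.pos⟩ ∧
          x = ((0 : ℤ), Pi.single (⟨0, hp.pos⟩ : Fin p) (1 : ℤ) + Pi.single i (1 : ℤ))})) :
    Module.finrank ℤ L = p + 1 ∧
      Nonempty (((ℤ × (Fin p → ℤ)) ⧸ L) ≃ₗ[ℤ] ZMod (p - 2)) := by
  have hp2 : p ≠ 2 := by rintro rfl; exact (by decide : ¬ Odd 2) hodd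
  have hp3 : 3 ≤ p := by have := hp.two_le; omega
  have hcast : ((p - 2 : ℕ) : ℤ) = (p : ℤ) - 2 := by
    rw [Nat.cast_sub (by omega)]; norm_num
  set i0 : Fin p := ⟨0, hp.pos⟩ with hi0
  -- membership of the key generators
  have hg1 : ((1 : ℤ), (0 : Fin p → ℤ)) ∈ L := by
    rw [hL]; exact Submodule.subset_span (Or.inl (Or.inl rfl))
  have hg2 : ((0 : ℤ), fun _ => (1 : ℤ)) ∈ L := by
    rw [hL]; exact Submodule.subset_span (Or.inl (Or.inr rfl))
  have hg3 : ∀ i : Fin p, i ≠ i0 →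
      ((0 : ℤ), Pi.single i0 (1 : ℤ) + Pi.single i (1 : ℤ)) ∈ L := by
    intro i hi
    rw [hL]; exact Submodule.subset_span (Or.inr ⟨i, hi, rfl⟩)
  -- (p-2) • e₀ ∈ L
  have hkey : ((0 : ℤ), ((p : ℤ) - 2) • Pi.single i0 (1 : ℤ)) ∈ L := by
    have hsum : (∑ i ∈ Finset.univ.erase i0,
        (((0 : ℤ), Pi.single i0 (1 : ℤ) + Pi.single i (1 : ℤ)) : ℤ × (Fin p → ℤ)))
        - ((0 : ℤ), fun _ => (1 : ℤ))
        = ((0 : ℤ), ((p : ℤ) - 2) • Pi.single i0 (1 : ℤ)) := by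
      ext : 1
      · simp [Prod.fst_sum]
      · funext j
        simp only [Prod.snd_sub, Prod.snd_sum, Finset.sum_apply, Pi.sub_apply,
          Pi.add_apply, Pi.smul_apply, smul_eq_mul, Pi.single_apply]
        rw [Finset.sum_add_distrib, Finset.sum_const, Finset.sum_ite_eq]
        by_cases hj : j = i0
        · rw [hj]
          rw [if_pos rfl, if_neg (by simp)]
          simp only [Finset.card_erase_of_mem (Finset.mem_univ (i0 : Fin p)),
            Finset.card_univ, Fintype.card_fin, add_zero]
          rw [nsmul_eq_mul, Nat.cast_sub (by omega)]
          push_cast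
          ring
        · simp [Finset.mem_erase, hj]
    rw [← hsum]
    exact Submodule.sub_mem _ (Submodule.sum_mem _ fun i hi =>
      hg3 i (Finset.ne_of_mem_erase hi)) hg2
  -- the linear functional
  let f : (ℤ × (Fin p → ℤ)) →ₗ[ℤ] ℤ :=
    { toFun := fun x => 2 * x.2 i0 - ∑ i, x.2 i
      map_add' := by intro x y; simp [Finset.sum_add_distrib]; ring
      map_smul' := by
        intro c x
        simp only [Prod.smul_snd, Pi.smul_apply, smul_eq_mul, RingHom.id_apply]
        rw [mul_sub, Finset.mul_sum]
        ring
      }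
  let φ : (ℤ × (Fin p → ℤ)) →ₗ[ℤ] ZMod (p - 2) :=
    ((Int.castRingHom (ZMod (p - 2))).toAddMonoidHom.toIntLinearMap).comp f
  have hφ : ∀ x : ℤ × (Fin p → ℤ), φ x = ((2 * x.2 i0 - ∑ i, x.2 i : ℤ) : ZMod (p - 2)) :=
    fun x => rfl
  have hker : LinearMap.ker φ = L := by
    apply le_antisymm
    · -- ker ⊆ L
      intro x hx
      rw [LinearMap.mem_ker, hφ, ZMod.intCast_zmod_eq_zero_iff_dvd, hcast] at hx
      obtain ⟨k, hk⟩ := hx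
      have hdecomp : x = x.1 • ((1 : ℤ), (0 : Fin p → ℤ))
          + k • ((0 : ℤ), ((p : ℤ) - 2) • Pi.single i0 (1 : ℤ))
          + ∑ i ∈ Finset.univ.erase i0,
              x.2 i • (((0 : ℤ), Pi.single i0 (1 : ℤ) + Pi.single i (1 : ℤ)) : ℤ × (Fin p → ℤ)) := by
        ext : 1
        · simp [Prod.fst_sum]
        · funext j
          simp only [Prod.snd_add, Prod.snd_sum, Prod.smul_snd, Finset.sum_apply,
            Pi.add_apply, Pi.smul_apply, smul_eq_mul, Pi.single_apply, smul_zero,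
            Pi.zero_apply, mul_zero, zero_add]
          by_cases hj : j = i0
          · rw [hj, if_pos rfl]
            have hterm : ∀ i ∈ Finset.univ.erase i0,
                x.2 i * ((1:ℤ) + if (i0 : Fin p) = i then (1:ℤ) else 0) = x.2 i := by
              intro i hi
              rw [if_neg (fun h => (Finset.ne_of_mem_erase hi) h.symm),
                add_zero, mul_one]
            rw [Finset.sum_congr rfl hterm,
              Finset.sum_erase_eq_sub (Finset.mem_univ (i0 : Fin p))]
            linear_combination hk
          · rw [if_neg hj]
            have hterm : ∀ i ∈ Finset.univ.erase i0,
                x.2 i * ((0:ℤ) + if j = i then (1:ℤ) else 0)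
                = if j = i then x.2 i else 0 := by
              intro i hi
              rw [zero_add, mul_ite, mul_one, mul_zero]
            rw [Finset.sum_congr rfl hterm, Finset.sum_ite_eq,
              if_pos (Finset.mem_erase.mpr ⟨hj, Finset.mem_univ j⟩)]
            ring
      rw [hdecomp]
      exact Submodule.add_mem _ (Submodule.add_mem _ (Submodule.smul_mem _ _ hg1)
        (Submodule.smul_mem _ _ hkey))
        (Submodule.sum_mem _ fun i hi => Submodule.smul_mem _ _
          (hg3 i (Finset.ne_of_mem_erase hi)))
    · -- L ⊆ ker
      rw [hL, Submodule.span_le]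
      rintro x (hx | ⟨i, hi, rfl⟩)
      · rcases hx with rfl | rfl
        · simp [LinearMap.mem_ker, hφ]
        · simp only [SetLike.mem_coe, LinearMap.mem_ker, hφ]
          rw [ZMod.intCast_zmod_eq_zero_iff_dvd, hcast]
          exact ⟨-1, by
            simp only [Finset.sum_const, Finset.card_univ, Fintype.card_fin,
              nsmul_eq_mul, mul_one]
            ring⟩
      · simp only [SetLike.mem_coe, LinearMap.mem_ker, hφ]
        have h1 : (∑ j, ((Pi.single i0 (1:ℤ) + Pi.single i 1) : Fin p → ℤ) j) = 2 := by
          simp only [Pi.add_apply, Pi.single_apply, Finset.sum_add_distrib,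
            Finset.sum_ite_eq, Finset.mem_univ, if_pos]
          norm_num
        have h2 : ((Pi.single i0 (1:ℤ) + Pi.single i 1) : Fin p → ℤ) i0 = 1 := by
          simp [Pi.single_apply, Ne.symm hi]
        rw [h1, h2]
        simp
  have hsurj : Function.Surjective φ := by
    intro z
    obtain ⟨m, rfl⟩ := ZMod.intCast_surjective z
    refine ⟨((0 : ℤ), Pi.single i0 m), ?_⟩
    rw [hφ]
    congr 1
    simp [Pi.single_apply]
    ring
  constructor
  · -- finrank
    have hXfr : Module.finrank ℤ (ℤ × (Fin p → ℤ)) = p + 1 := by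
      simp [Module.finrank_prod]
      omega
    have hle : Module.finrank ℤ L ≤ p + 1 := hXfr ▸ Submodule.finrank_le L
    have hne : ((p : ℤ) - 2) ≠ 0 := by omega
    have hmem : ∀ x : ℤ × (Fin p → ℤ), ((p : ℤ) - 2) • x ∈ L := by
      intro x
      rw [← hker, LinearMap.mem_ker, map_smul, zsmul_eq_mul]
      have hz : (((p : ℤ) - 2 : ℤ) : ZMod (p - 2)) = 0 := by
        rw [← hcast, ZMod.intCast_zmod_eq_zero_iff_dvd]
      rw [hz, zero_mul]
    let ψ : (ℤ × (Fin p → ℤ)) →ₗ[ℤ] L :=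
      LinearMap.codRestrict L (((p : ℤ) - 2) • LinearMap.id) hmem
    have hinj : Function.Injective ψ := fun a b h =>
      smul_right_injective (ℤ × (Fin p → ℤ)) hne (Subtype.ext_iff.mp h)
    have hge : p + 1 ≤ Module.finrank ℤ L :=
      hXfr ▸ LinearMap.finrank_le_finrank_of_injective hinj
    omega
  · exact ⟨(Submodule.quotEquivOfEq _ _ hker.symm).trans
      (φ.quotKerEquivOfSurjective hsurj)⟩
end
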